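/- Let χ : ℝⁿ → ℝ be a bounded measurable 1-periodic function (periodic with period 1 in each coordinate) and Ω ⊂ ℝⁿ a bounded open set. Then the rescaled functions χ^ε(x) := χ(x/ε) converge weakly in L²(Ω) as ε → 0 to the constant ⟨χ⟩ = ∫_{[0,1]ⁿ} χ(ξ) dξ; i.e., for every φ ∈ L²(Ω), ∫_Ω χ(x/ε) φ(x) dx → ⟨χ⟩ ∫_Ω φ(x) dx. -/

import Mathlib

/-!
Subtracting the mean reduces everything to a periodic `ψ` of mean zero. Cutting `ℝⁿ` into the
integer translates `z + [0,1)ⁿ` of the unit cube, on each of which `ψ` has mean zero, the integral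
`∫ ψ(u) g(u) du` only sees the oscillation `g(z + y) - g(z)` of `g` across the cells. For
`g(u) = f(εu)` with `f` continuous and compactly supported, this oscillation is uniformly small and
lives on a set of measure `O(ε⁻ⁿ)`, which the Jacobian `εⁿ` of the substitution `x = εu` cancels.
As the functions `ψ(·/ε)` are bounded uniformly in `ε`, the convergence extends from `C_c` to `L¹`
by density, and `φ ∈ L²(Ω)` extended by zero lies in `L¹` because `Ω` has finite measure.
-/

open MeasureTheory Filter Set Topology

namespace PeriodicHomogenization

variable {n : ℕ}

def unitCube (n : ℕ) : Set (Fin n → ℝ) := univ.pi fun _ => Ico 0 1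

theorem measurableSet_unitCube : MeasurableSet (unitCube n) :=
  MeasurableSet.univ_pi fun _ => measurableSet_Ico

theorem volume_unitCube : volume (unitCube n) = 1 := by
  simp [unitCube, volume_pi_pi, Real.volume_Ico]

theorem unitCube_ae_eq_Icc : unitCube n =ᵐ[volume] Icc (0 : Fin n → ℝ) 1 := by
  simpa [unitCube, ← volume_pi] using Measure.univ_pi_Ico_ae_eq_Icc
    (μ := fun _ : Fin n => (volume : Measure ℝ)) (f := 0) (g := 1)

theorem norm_le_one_of_mem_unitCube {y : Fin n → ℝ} (hy : y ∈ unitCube n) : ‖y‖ ≤ 1 := by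
  refine (pi_norm_le_iff_of_nonneg zero_le_one).2 fun i => ?_
  obtain ⟨h0, h1⟩ := hy i (mem_univ i)
  rw [Real.norm_eq_abs, abs_of_nonneg h0]
  exact h1.le

noncomputable def intFloor (x : Fin n → ℝ) : Fin n → ℤ := fun i => ⌊x i⌋

theorem measurable_intFloor : Measurable (intFloor (n := n)) :=
  measurable_pi_lambda _ fun i => (measurable_pi_apply i).floor

theorem preimage_add_intFloor_fiber (z : Fin n → ℤ) :
    ((fun i => (z i : ℝ)) + ·) ⁻¹' (intFloor ⁻¹' {z}) = unitCube n := by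
  ext y
  simp only [mem_preimage, mem_singleton_iff, intFloor, funext_iff, Pi.add_apply,
    Int.floor_intCast_add, add_eq_left, Int.floor_eq_zero_iff, unitCube, Set.mem_pi, mem_univ,
    true_implies]

theorem hasSum_integral_comp_add_unitCube {E : Type*} [NormedAddCommGroup E] [NormedSpace ℝ E]
    {g : (Fin n → ℝ) → E} (hg : Integrable g) :
    HasSum (fun z : Fin n → ℤ => ∫ y in unitCube n, g ((fun i => (z i : ℝ)) + y)) (∫ x, g x) := by
  have h := hasSum_integral_iUnion (fun z => measurable_intFloor (measurableSet_singleton z))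
    (pairwise_disjoint_fiber intFloor) hg.integrableOn
  rw [← preimage_iUnion, iUnion_of_singleton, preimage_univ, Measure.restrict_univ] at h
  convert h using 2 with z
  rw [← preimage_add_intFloor_fiber z,
    (measurePreserving_add_left volume _).setIntegral_preimage_emb
      (measurableEmbedding_addLeft _)]

theorem integrableOn_unitCube_of_abs_le {ψ : (Fin n → ℝ) → ℝ} {M : ℝ}
    (hψm : AEStronglyMeasurable ψ) (hψM : ∀ ξ, |ψ ξ| ≤ M) : IntegrableOn ψ (unitCube n) :=
  Measure.integrableOn_of_bounded (M := M) (by simp [volume_unitCube]) hψm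
    (Eventually.of_forall hψM)

theorem abs_integral_mul_le_of_oscillation {ψ g G : (Fin n → ℝ) → ℝ} {M : ℝ}
    (hψm : AEStronglyMeasurable ψ) (hψM : ∀ ξ, |ψ ξ| ≤ M)
    (hψper : ∀ (ξ : Fin n → ℝ) (z : Fin n → ℤ), ψ (ξ + fun i => (z i : ℝ)) = ψ ξ)
    (hψ0 : ∫ y in unitCube n, ψ y = 0) (hg : Integrable g) (hG : Integrable G)
    (hgG : ∀ (z : Fin n → ℤ), ∀ y ∈ unitCube n,
      |g ((fun i => (z i : ℝ)) + y) - g fun i => (z i : ℝ)| ≤ G ((fun i => (z i : ℝ)) + y)) :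
    |∫ u, ψ u * g u| ≤ M * ∫ u, G u := by
  have hM : 0 ≤ M := (abs_nonneg _).trans (hψM 0)
  have hψM' : ∀ ξ, ‖ψ ξ‖ ≤ M := hψM
  have hψg := hasSum_integral_comp_add_unitCube (hg.bdd_mul hψm (ae_of_all _ hψM'))
  rw [← integral_const_mul]
  refine hψg.norm_le_of_bounded (hasSum_integral_comp_add_unitCube (hG.const_mul M)) fun z => ?_
  set c : Fin n → ℝ := fun i => (z i : ℝ)
  have hgc : IntegrableOn (fun y => g (c + y)) (unitCube n) := (hg.comp_add_left c).integrableOn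
  have hcell : ∫ y in unitCube n, ψ (c + y) * g (c + y)
      = ∫ y in unitCube n, ψ y * (g (c + y) - g c) := by
    have hψc : ∀ y, ψ (c + y) = ψ y := fun y => by rw [add_comm]; exact hψper y z
    simp_rw [hψc, mul_sub]
    rw [integral_sub (hgc.bdd_mul hψm.restrict (ae_of_all _ hψM'))
      ((integrableOn_unitCube_of_abs_le hψm hψM).mul_const _), integral_mul_const, hψ0, zero_mul,
      sub_zero]
  rw [hcell]
  refine norm_integral_le_of_norm_le ((hG.comp_add_left c).integrableOn.const_mul M)
    ((ae_restrict_iff' measurableSet_unitCube).2 (Eventually.of_forall fun y hy => ?_))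
  rw [Real.norm_eq_abs, abs_mul]
  exact mul_le_mul (hψM y) (hgG z y hy) (abs_nonneg _) hM

theorem abs_sub_le_indicator_cthickening {X : Type*} [PseudoMetricSpace X] {f : X → ℝ} {a b : X}
    {r δ : ℝ} (hab : dist a b ≤ r) (hf : |f a - f b| ≤ δ) :
    |f a - f b| ≤ (Metric.cthickening r (tsupport f)).indicator (fun _ => δ) a := by
  by_cases ha : a ∈ Metric.cthickening r (tsupport f)
  · rwa [indicator_of_mem ha]
  · have hfa : f a = 0 :=
      image_eq_zero_of_notMem_tsupport fun h => ha (Metric.self_subset_cthickening _ h)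
    have hfb : f b = 0 :=
      image_eq_zero_of_notMem_tsupport fun h => ha (Metric.mem_cthickening_of_dist_le a b r _ h hab)
    simp [ha, hfa, hfb]

theorem tendsto_integral_comp_inv_smul_mul_of_hasCompactSupport {ψ f : (Fin n → ℝ) → ℝ} {M : ℝ}
    (hψm : AEStronglyMeasurable ψ) (hψM : ∀ ξ, |ψ ξ| ≤ M)
    (hψper : ∀ (ξ : Fin n → ℝ) (z : Fin n → ℤ), ψ (ξ + fun i => (z i : ℝ)) = ψ ξ)
    (hψ0 : ∫ y in unitCube n, ψ y = 0) (hf : Continuous f) (hfc : HasCompactSupport f) :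
    Tendsto (fun ε : ℝ => ∫ x, ψ (ε⁻¹ • x) * f x) (𝓝[>] 0) (𝓝 0) := by
  set K := Metric.cthickening 1 (tsupport f)
  have hK : IsCompact K := hfc.isCompact.cthickening
  set V := volume.real K
  rw [Metric.tendsto_nhdsWithin_nhds]
  intro η hη
  obtain ⟨δ, hδ, hδη⟩ := exists_pos_mul_lt hη (M * V)
  obtain ⟨ε₀, hε₀, hf_uc⟩ :=
    Metric.uniformContinuous_iff.1 (hfc.uniformContinuous_of_continuous hf) δ hδ
  refine ⟨min ε₀ 1, by positivity, fun ε (hε : 0 < ε) hεdist => ?_⟩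
  rw [Real.dist_eq, sub_zero, abs_of_pos hε, lt_min_iff] at hεdist
  set G : (Fin n → ℝ) → ℝ := K.indicator fun _ => δ
  have hscale : ∫ x, ψ (ε⁻¹ • x) * f x = ε ^ n * ∫ u, ψ u * f (ε • u) := by
    simpa [smul_inv_smul₀ hε.ne', abs_of_pos hε] using
      Measure.integral_comp_inv_smul volume (fun u => ψ u * f (ε • u)) ε
  have hGscale : ε ^ n * ∫ u, G (ε • u) = V * δ := by
    rw [Measure.integral_comp_smul, integral_indicator_const _ hK.measurableSet]
    simp [V, abs_of_pos hε, hε.ne']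
  have hosc : |∫ u, ψ u * f (ε • u)| ≤ M * ∫ u, G (ε • u) := by
    refine abs_integral_mul_le_of_oscillation hψm hψM hψper hψ0
      ((hf.comp (continuous_const_smul ε)).integrable_of_hasCompactSupport
        (hfc.comp_smul hε.ne'))
      ((integrable_indicator_iff hK.measurableSet).2 (integrableOn_const hK.measure_lt_top.ne)
        |>.comp_smul hε.ne') fun z y hy => ?_
    have hdist : dist (ε • ((fun i => (z i : ℝ)) + y)) (ε • fun i => (z i : ℝ)) ≤ ε := by
      rw [dist_smul₀, dist_self_add_left, Real.norm_eq_abs, abs_of_pos hε]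
      exact mul_le_of_le_one_right hε.le (norm_le_one_of_mem_unitCube hy)
    exact abs_sub_le_indicator_cthickening (hdist.trans hεdist.2.le)
      (hf_uc (hdist.trans_lt hεdist.1)).le
  rw [dist_zero_right, hscale, Real.norm_eq_abs, abs_mul, abs_of_pos (pow_pos hε n)]
  calc ε ^ n * |∫ u, ψ u * f (ε • u)| ≤ ε ^ n * (M * ∫ u, G (ε • u)) := by gcongr
    _ = M * V * δ := by rw [mul_left_comm, hGscale, mul_assoc]
    _ < η := hδη

theorem integrable_comp_inv_smul_mul {ψ f : (Fin n → ℝ) → ℝ} {M : ℝ} (hψm : Measurable ψ)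
    (hψM : ∀ ξ, |ψ ξ| ≤ M) (hf : Integrable f) (ε : ℝ) :
    Integrable fun x => ψ (ε⁻¹ • x) * f x :=
  hf.bdd_mul (hψm.comp (measurable_const_smul _)).aestronglyMeasurable (ae_of_all _ fun _ => hψM _)

theorem abs_integral_comp_inv_smul_mul_le {ψ f : (Fin n → ℝ) → ℝ} {M : ℝ}
    (hψM : ∀ ξ, |ψ ξ| ≤ M) (hf : Integrable f) (ε : ℝ) :
    |∫ x, ψ (ε⁻¹ • x) * f x| ≤ M * ∫ x, |f x| := by
  rw [← integral_const_mul M fun x => |f x|, ← Real.norm_eq_abs]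
  refine norm_integral_le_of_norm_le (hf.abs.const_mul M) (ae_of_all _ fun x => ?_)
  rw [Real.norm_eq_abs, abs_mul]
  exact mul_le_mul_of_nonneg_right (hψM _) (abs_nonneg _)

theorem tendsto_integral_comp_inv_smul_mul_of_integrable {ψ f : (Fin n → ℝ) → ℝ} {M : ℝ}
    (hψm : Measurable ψ) (hψM : ∀ ξ, |ψ ξ| ≤ M)
    (hψper : ∀ (ξ : Fin n → ℝ) (z : Fin n → ℤ), ψ (ξ + fun i => (z i : ℝ)) = ψ ξ)
    (hψ0 : ∫ y in unitCube n, ψ y = 0) (hf : Integrable f) :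
    Tendsto (fun ε : ℝ => ∫ x, ψ (ε⁻¹ • x) * f x) (𝓝[>] 0) (𝓝 0) := by
  rw [Metric.tendsto_nhds]
  intro η hη
  obtain ⟨δ, hδ, hδη⟩ := exists_pos_mul_lt (half_pos hη) M
  obtain ⟨g, hgc, hfg, hg, hgi⟩ := hf.exists_hasCompactSupport_integral_sub_le hδ
  have hfgi : Integrable fun x => f x - g x := hf.sub hgi
  filter_upwards [Metric.tendsto_nhds.1 (tendsto_integral_comp_inv_smul_mul_of_hasCompactSupport
    hψm.aestronglyMeasurable hψM hψper hψ0 hg hgc) _ (half_pos hη)] with ε hε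
  have hsplit : ∫ x, ψ (ε⁻¹ • x) * f x
      = (∫ x, ψ (ε⁻¹ • x) * (f x - g x)) + ∫ x, ψ (ε⁻¹ • x) * g x := by
    rw [← integral_add (integrable_comp_inv_smul_mul hψm hψM hfgi ε)
      (integrable_comp_inv_smul_mul hψm hψM hgi ε)]
    simp only [mul_sub, sub_add_cancel]
  rw [dist_zero_right] at hε ⊢
  calc ‖∫ x, ψ (ε⁻¹ • x) * f x‖
      ≤ |∫ x, ψ (ε⁻¹ • x) * (f x - g x)| + ‖∫ x, ψ (ε⁻¹ • x) * g x‖ := hsplit ▸ norm_add_le _ _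
    _ ≤ M * δ + ‖∫ x, ψ (ε⁻¹ • x) * g x‖ := by
        gcongr
        exact (abs_integral_comp_inv_smul_mul_le hψM hfgi ε).trans
          (mul_le_mul_of_nonneg_left hfg ((abs_nonneg _).trans (hψM 0)))
    _ < η := by linarith

theorem tendsto_integral_comp_inv_smul_mul {χ f : (Fin n → ℝ) → ℝ} {M : ℝ}
    (hχm : Measurable χ) (hχM : ∀ ξ, |χ ξ| ≤ M)
    (hχper : ∀ (ξ : Fin n → ℝ) (z : Fin n → ℤ), χ (ξ + fun i => (z i : ℝ)) = χ ξ)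
    (hf : Integrable f) :
    Tendsto (fun ε : ℝ => ∫ x, χ (ε⁻¹ • x) * f x) (𝓝[>] 0)
      (𝓝 ((∫ y in unitCube n, χ y) * ∫ x, f x)) := by
  set m := ∫ y in unitCube n, χ y
  have hmean : ∫ y in unitCube n, (χ y - m) = 0 := by
    rw [integral_sub (integrableOn_unitCube_of_abs_le hχm.aestronglyMeasurable hχM)
      (integrableOn_const (by simp [volume_unitCube])), setIntegral_const]
    simp [Measure.real, volume_unitCube, m]
  have hψM : ∀ ξ, |χ ξ - m| ≤ M + |m| := fun ξ => (abs_sub _ _).trans (by gcongr; exact hχM ξ)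
  have h := (tendsto_integral_comp_inv_smul_mul_of_integrable (hχm.sub_const m) hψM
    (fun ξ z => by rw [hχper]) hmean hf).add_const (m * ∫ x, f x)
  rw [zero_add] at h
  refine h.congr fun ε => ?_
  rw [← integral_const_mul, ← integral_add
    (integrable_comp_inv_smul_mul (hχm.sub_const m) hψM hf ε) (hf.const_mul m)]
  simp only [sub_mul, sub_add_cancel]

end PeriodicHomogenization

open PeriodicHomogenization

/-- Weak `L²` convergence of rescaled periodic functions to their mean. -/
theorem stmt_8 (n : ℕ) (χ : (Fin n → ℝ) → ℝ)
    (hmeas : Measurable χ) (hbdd : ∃ M : ℝ, ∀ ξ, |χ ξ| ≤ M)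
    (hper : ∀ (ξ : Fin n → ℝ) (z : Fin n → ℤ), χ (ξ + fun i => (z i : ℝ)) = χ ξ)
    (Ω : Set (Fin n → ℝ)) (hΩ : IsOpen Ω) (hΩbdd : Bornology.IsBounded Ω) :
    ∀ φ : (Fin n → ℝ) → ℝ, MemLp φ 2 (volume.restrict Ω) →
      Tendsto (fun ε : ℝ => ∫ x in Ω, χ (ε⁻¹ • x) * φ x)
        (nhdsWithin 0 (Set.Ioi 0))
        (nhds ((∫ ξ in Set.Icc (0 : Fin n → ℝ) 1, χ ξ) * ∫ x in Ω, φ x)) := by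
  obtain ⟨M, hM⟩ := hbdd
  intro φ hφ
  have : IsFiniteMeasure (volume.restrict Ω) := isFiniteMeasure_restrict.2 hΩbdd.measure_lt_top.ne
  have hφΩ : Integrable (Ω.indicator φ) :=
    (integrable_indicator_iff hΩ.measurableSet).2 (hφ.integrable one_le_two)
  have h := tendsto_integral_comp_inv_smul_mul hmeas hM hper hφΩ
  rw [integral_indicator hΩ.measurableSet, setIntegral_congr_set unitCube_ae_eq_Icc] at h
  refine h.congr fun ε => ?_
  rw [← integral_indicator hΩ.measurableSet]
  simp_rw [indicator_mul_right]
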